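/- For R ∈ (0,1), set L(R) = log((1−R)/(1+R)) and define u₀(R) = R^{−1}·L(R), u₁(R) = R^{−2}·L(R) + 2R^{−1}, and u₂(R) = ((3−R²)/(2R³))·L(R) + 3R^{−2}. Then u₀, u₁, u₂ are smooth on (0,1), and for each ℓ ∈ {0,1,2} and every R ∈ (0,1) one has the identity d/dR [ R²(1−R²)·u_ℓ'(R) ] = (ℓ(ℓ+1) + 2R²)·u_ℓ(R). -/

import Mathlib

/-!
Write `L(r) = log ((1 - r) / (1 + r))`, so that `L' = -2 / (1 - r²)`. Each `u_ℓ` has the form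
`a L + b` with `a`, `b` rational, and since the weight `r² (1 - r²)` cancels the denominator of
`L'`, the flux `r² (1 - r²) u'` is again of this form. The mode equation for `a L + b` therefore
splits into two rational identities: `a` must solve the mode equation itself, and `b` an
inhomogeneous version of it forced by `L'`. (Up to the factor `-2 / r`, `a L + b` is the Legendre
function of the second kind `Q_ℓ(1 / r)`, and `a = P_ℓ(1 / r) / r` with `P_ℓ` the Legendre
polynomial.)
-/

noncomputable def u0 (R : ℝ) : ℝ := Real.log ((1 - R) / (1 + R)) / R

noncomputable def u1 (R : ℝ) : ℝ := Real.log ((1 - R) / (1 + R)) / R ^ 2 + 2 / R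

noncomputable def u2 (R : ℝ) : ℝ :=
  (3 - R ^ 2) / (2 * R ^ 3) * Real.log ((1 - R) / (1 + R)) + 3 / R ^ 2

open Real Filter Topology Set

noncomputable def logRatio (r : ℝ) : ℝ := log ((1 - r) / (1 + r))

theorem contDiffOn_logRatio {n : WithTop ℕ∞} : ContDiffOn ℝ n logRatio (Ioo (-1) 1) := by
  refine ContDiffOn.log ?_ fun r ⟨h₁, h₂⟩ => (div_pos (by linarith) (by linarith)).ne'
  exact contDiffOn_const.sub contDiffOn_id |>.div (contDiffOn_const.add contDiffOn_id)
    fun r ⟨h₁, _⟩ => by linarith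

theorem ContDiffOn.mul_logRatio_add {a b : ℝ → ℝ} {s : Set ℝ} {n : WithTop ℕ∞}
    (ha : ContDiffOn ℝ n a s) (hb : ContDiffOn ℝ n b s) (hs : s ⊆ Ioo (-1) 1) :
    ContDiffOn ℝ n (fun r => a r * logRatio r + b r) s :=
  (ha.mul (contDiffOn_logRatio.mono hs)).add hb

theorem u0_eq_logRatio : u0 = fun r => 1 / r * logRatio r + 0 := by
  funext r; simp [u0, logRatio, div_eq_inv_mul]

theorem u1_eq_logRatio : u1 = fun r => 1 / r ^ 2 * logRatio r + 2 / r := by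
  funext r; simp [u1, logRatio, div_eq_inv_mul]

theorem contDiffOn_u0 {n : WithTop ℕ∞} : ContDiffOn ℝ n u0 (Ioo 0 1) := by
  rw [u0_eq_logRatio]
  refine .mul_logRatio_add ?_ contDiffOn_const (Ioo_subset_Ioo_left (by norm_num))
  fun_prop (disch := exact fun r hr => by have := hr.1; positivity)

theorem contDiffOn_u1 {n : WithTop ℕ∞} : ContDiffOn ℝ n u1 (Ioo 0 1) := by
  rw [u1_eq_logRatio]
  refine .mul_logRatio_add ?_ ?_ (Ioo_subset_Ioo_left (by norm_num)) <;>
    fun_prop (disch := exact fun r hr => by have := hr.1; positivity)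

theorem contDiffOn_u2 {n : WithTop ℕ∞} : ContDiffOn ℝ n u2 (Ioo 0 1) := by
  refine .mul_logRatio_add ?_ ?_ (Ioo_subset_Ioo_left (by norm_num)) <;>
    fun_prop (disch := exact fun r hr => by have := hr.1; positivity)

theorem hasDerivAt_logRatio {r : ℝ} (hr : r ^ 2 ≠ 1) :
    HasDerivAt logRatio (-2 / (1 - r ^ 2)) r := by
  have h : (1 - r) * (1 + r) ≠ 0 := by
    rw [show (1 - r) * (1 + r) = 1 - r ^ 2 by ring]; exact sub_ne_zero.2 hr.symm
  have h₁ := left_ne_zero_of_mul h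
  have h₂ := right_ne_zero_of_mul h
  refine (((hasDerivAt_id' r).const_sub 1).fun_div ((hasDerivAt_id' r).const_add 1) h₂).log
    (div_ne_zero h₁ h₂) |>.congr_deriv ?_
  field_simp
  ring

noncomputable def radialFlux (u : ℝ → ℝ) (r : ℝ) : ℝ := r ^ 2 * (1 - r ^ 2) * deriv u r

theorem deriv_radialFlux_mul_logRatio_add {a b a' b' : ℝ → ℝ} {a'' b'' q R : ℝ}
    (hR : R ^ 2 ≠ 1) (ha : ∀ᶠ r in 𝓝 R, HasDerivAt a (a' r) r)
    (hb : ∀ᶠ r in 𝓝 R, HasDerivAt b (b' r) r) (ha' : HasDerivAt a' a'' R)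
    (hb' : HasDerivAt b' b'' R)
    (hqa : R ^ 2 * (1 - R ^ 2) * a'' + (2 * R - 4 * R ^ 3) * a' R = q * a R)
    (hqb : R ^ 2 * (1 - R ^ 2) * b'' + (2 * R - 4 * R ^ 3) * b' R - 4 * R * (a R + R * a' R) =
      q * b R) :
    deriv (radialFlux fun r => a r * logRatio r + b r) R = q * (a R * logRatio R + b R) := by
  have hflux : radialFlux (fun r => a r * logRatio r + b r) =ᶠ[𝓝 R] fun r =>
      r ^ 2 * (1 - r ^ 2) * a' r * logRatio r + (r ^ 2 * (1 - r ^ 2) * b' r - 2 * r ^ 2 * a r) := by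
    filter_upwards [ha, hb, (continuous_pow 2).continuousAt.eventually_ne hR] with r har hbr hr
    rw [radialFlux, ((har.fun_mul (hasDerivAt_logRatio hr)).fun_add hbr).deriv]
    have : 1 - r ^ 2 ≠ 0 := sub_ne_zero.2 hr.symm
    field_simp
    ring
  have hweight : HasDerivAt (fun r => r ^ 2 * (1 - r ^ 2)) (2 * R - 4 * R ^ 3) R := by
    refine ((hasDerivAt_pow 2 R).fun_mul ((hasDerivAt_pow 2 R).const_sub 1)).congr_deriv ?_
    ring
  have hsq : HasDerivAt (fun r => 2 * r ^ 2) (4 * R) R := by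
    refine ((hasDerivAt_pow 2 R).const_mul 2).congr_deriv ?_
    ring
  have ha₀ : HasDerivAt a (a' R) R := ha.self_of_nhds
  rw [hflux.deriv_eq, (((hweight.fun_mul ha').fun_mul (hasDerivAt_logRatio hR)).fun_add
    ((hweight.fun_mul hb').fun_sub (hsq.fun_mul ha₀))).deriv]
  have : 1 - R ^ 2 ≠ 0 := sub_ne_zero.2 hR.symm
  field_simp
  linear_combination logRatio R * hqa + hqb

theorem deriv_radialFlux_u0 {R : ℝ} (h₀ : R ≠ 0) (h₁ : R ^ 2 ≠ 1) :
    deriv (radialFlux u0) R = (0 * (0 + 1) + 2 * R ^ 2) * u0 R := by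
  rw [u0_eq_logRatio]
  refine deriv_radialFlux_mul_logRatio_add h₁ (a' := fun r => -1 / r ^ 2) (b' := fun _ => 0)
    (a'' := 2 / R ^ 3) ?_ (.of_forall fun r => hasDerivAt_const r 0) ?_ (hasDerivAt_const R 0) ?_ ?_
  · filter_upwards [eventually_ne_nhds h₀] with r hr
    refine ((hasDerivAt_const r 1).fun_div (hasDerivAt_id' r) hr).congr_deriv ?_
    field_simp; ring
  · refine ((hasDerivAt_const R (-1)).fun_div (hasDerivAt_pow 2 R) (pow_ne_zero 2 h₀)).congr_deriv ?_
    field_simp; ring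
  · field_simp; ring
  · field_simp; ring

theorem deriv_radialFlux_u1 {R : ℝ} (h₀ : R ≠ 0) (h₁ : R ^ 2 ≠ 1) :
    deriv (radialFlux u1) R = (1 * (1 + 1) + 2 * R ^ 2) * u1 R := by
  rw [u1_eq_logRatio]
  refine deriv_radialFlux_mul_logRatio_add h₁ (a' := fun r => -2 / r ^ 3)
    (b' := fun r => -2 / r ^ 2) (a'' := 6 / R ^ 4) (b'' := 4 / R ^ 3) ?_ ?_ ?_ ?_ ?_ ?_
  · filter_upwards [eventually_ne_nhds h₀] with r hr
    refine ((hasDerivAt_const r 1).fun_div (hasDerivAt_pow 2 r) (pow_ne_zero 2 hr)).congr_deriv ?_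
    field_simp; ring
  · filter_upwards [eventually_ne_nhds h₀] with r hr
    refine ((hasDerivAt_const r 2).fun_div (hasDerivAt_id' r) hr).congr_deriv ?_
    field_simp; ring
  · refine ((hasDerivAt_const R (-2)).fun_div (hasDerivAt_pow 3 R) (pow_ne_zero 3 h₀)).congr_deriv ?_
    field_simp; ring
  · refine ((hasDerivAt_const R (-2)).fun_div (hasDerivAt_pow 2 R) (pow_ne_zero 2 h₀)).congr_deriv ?_
    field_simp; ring
  · field_simp; ring
  · field_simp; ring

theorem deriv_radialFlux_u2 {R : ℝ} (h₀ : R ≠ 0) (h₁ : R ^ 2 ≠ 1) :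
    deriv (radialFlux u2) R = (2 * (2 + 1) + 2 * R ^ 2) * u2 R := by
  refine deriv_radialFlux_mul_logRatio_add h₁ (a' := fun r => (r ^ 2 - 9) / (2 * r ^ 4))
    (b' := fun r => -6 / r ^ 3) (a'' := (18 - R ^ 2) / R ^ 5) (b'' := 18 / R ^ 4) ?_ ?_ ?_ ?_ ?_ ?_
  · filter_upwards [eventually_ne_nhds h₀] with r hr
    refine (((hasDerivAt_pow 2 r).const_sub 3).fun_div ((hasDerivAt_pow 3 r).const_mul 2)
      (by positivity)).congr_deriv ?_
    field_simp; ring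
  · filter_upwards [eventually_ne_nhds h₀] with r hr
    refine ((hasDerivAt_const r 3).fun_div (hasDerivAt_pow 2 r) (pow_ne_zero 2 hr)).congr_deriv ?_
    field_simp; ring
  · refine (((hasDerivAt_pow 2 R).sub_const 9).fun_div ((hasDerivAt_pow 4 R).const_mul 2)
      (by positivity)).congr_deriv ?_
    field_simp; ring
  · refine ((hasDerivAt_const R (-6)).fun_div (hasDerivAt_pow 3 R) (pow_ne_zero 3 h₀)).congr_deriv ?_
    field_simp; ring
  · field_simp; ring
  · field_simp; ring

/-- The explicit spherical-harmonic mode solutions `u₀, u₁, u₂` are smooth on `(0,1)` and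
satisfy `d/dR [R²(1-R²) u_ℓ'(R)] = (ℓ(ℓ+1) + 2R²) u_ℓ(R)` for `ℓ = 0, 1, 2`. -/
theorem mode_solutions_ODE :
    ContDiffOn ℝ (⊤ : ℕ∞) u0 (Set.Ioo 0 1) ∧
    ContDiffOn ℝ (⊤ : ℕ∞) u1 (Set.Ioo 0 1) ∧
    ContDiffOn ℝ (⊤ : ℕ∞) u2 (Set.Ioo 0 1) ∧
    ∀ R ∈ Set.Ioo (0 : ℝ) 1,
      deriv (fun r => r ^ 2 * (1 - r ^ 2) * deriv u0 r) R =
        (0 * (0 + 1) + 2 * R ^ 2) * u0 R ∧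
      deriv (fun r => r ^ 2 * (1 - r ^ 2) * deriv u1 r) R =
        (1 * (1 + 1) + 2 * R ^ 2) * u1 R ∧
      deriv (fun r => r ^ 2 * (1 - r ^ 2) * deriv u2 r) R =
        (2 * (2 + 1) + 2 * R ^ 2) * u2 R := by
  refine ⟨contDiffOn_u0, contDiffOn_u1, contDiffOn_u2, fun R ⟨hR₀, hR₁⟩ => ?_⟩
  have h₀ : R ≠ 0 := hR₀.ne'
  have h₁ : R ^ 2 ≠ 1 := (pow_lt_one₀ hR₀.le hR₁ two_ne_zero).ne
  exact ⟨deriv_radialFlux_u0 h₀ h₁, deriv_radialFlux_u1 h₀ h₁, deriv_radialFlux_u2 h₀ h₁⟩
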